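/- arXiv:2603.23036 — 5 statements merged into one kernel-verified Lean document; each statement's English description precedes it below -/
import Mathlib

section
/- If Φ : M_d(ℂ) → M_d(ℂ) is a *-algebra isomorphism, then there exists a unitary matrix U such that Φ(X) = U X U* for all X (Skolem–Noether in the matrix algebra case). -/
/-!
Under `Matrix.toEuclideanCLM`, a *-automorphism of `M_d(ℂ)` becomes a *-automorphism of the
operators on `ℂ^d`, which is automatically continuous in finite dimension; Mathlib's theorem
`StarAlgEquiv.eq_linearIsometryEquivConjStarAlgEquiv` then implements it by a linear isometry,
that is, by a unitary.
-/

theorem StarAlgEquiv.exists_unitary_eq_conjStarAlgAut_of_finiteDimensional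
    {𝕜 V : Type*} [RCLike 𝕜] [NormedAddCommGroup V] [InnerProductSpace 𝕜 V] [CompleteSpace V]
    [FiniteDimensional 𝕜 V] (f : (V →L[𝕜] V) ≃⋆ₐ[𝕜] (V →L[𝕜] V)) :
    ∃ u : unitary (V →L[𝕜] V), f = Unitary.conjStarAlgAut 𝕜 _ u := by
  obtain ⟨U, rfl⟩ := f.eq_linearIsometryEquivConjStarAlgEquiv
    (LinearMap.continuous_of_finiteDimensional f.toAlgEquiv.toLinearMap)
  exact ⟨_, (Unitary.conjStarAlgAut_symm_unitaryLinearIsometryEquiv U).symm⟩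

theorem Matrix.exists_unitary_eq_conjStarAlgAut
    {𝕜 n : Type*} [RCLike 𝕜] [Fintype n] [DecidableEq n]
    (f : Matrix n n 𝕜 ≃⋆ₐ[𝕜] Matrix n n 𝕜) :
    ∃ u : unitary (Matrix n n 𝕜), f = Unitary.conjStarAlgAut 𝕜 _ u := by
  let e : Matrix n n 𝕜 ≃⋆ₐ[𝕜] (EuclideanSpace 𝕜 n →L[𝕜] EuclideanSpace 𝕜 n) := toEuclideanCLM
  obtain ⟨u, hu⟩ :=
    ((e.symm.trans f).trans e).exists_unitary_eq_conjStarAlgAut_of_finiteDimensional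
  refine ⟨⟨e.symm u, Unitary.map_mem e.symm u.2⟩, StarAlgEquiv.ext fun X => ?_⟩
  calc f X = e.symm (((e.symm.trans f).trans e) (e X)) := by simp
    _ = e.symm (u * e X * (star u : EuclideanSpace 𝕜 n →L[𝕜] EuclideanSpace 𝕜 n)) := by
      rw [hu]; rfl
    _ = e.symm u * X * star (e.symm u) := by
      rw [map_mul, map_mul, e.symm_apply_apply]
      exact congrArg _ (map_star e.symm _)

theorem stmt6_general {d : ℕ}
    (Φ : Matrix (Fin d) (Fin d) ℂ →ₗ[ℂ] Matrix (Fin d) (Fin d) ℂ)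
    (hΦmul : ∀ X Y, Φ (X * Y) = Φ X * Φ Y)
    (hΦstar : ∀ X, Φ (star X) = star (Φ X))
    (hbij : Function.Bijective Φ) :
    ∃ U : Matrix (Fin d) (Fin d) ℂ,
      U * star U = 1 ∧ star U * U = 1 ∧ ∀ X, Φ X = U * X * star U := by
  let φ : Matrix (Fin d) (Fin d) ℂ →⋆ₙₐ[ℂ] Matrix (Fin d) (Fin d) ℂ :=
    { Φ with map_zero' := map_zero Φ, map_mul' := hΦmul, map_star' := hΦstar }
  obtain ⟨u, hu⟩ := Matrix.exists_unitary_eq_conjStarAlgAut (StarAlgEquiv.ofBijective φ hbij)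
  exact ⟨u, Unitary.mul_star_self_of_mem u.2, Unitary.star_mul_self_of_mem u.2,
    fun X => congr($hu X)⟩

/-- Skolem–Noether for matrix algebras: every *-algebra isomorphism of
`M_d(ℂ)` is conjugation by a unitary. -/
theorem stmt6 {d : ℕ}
    (Φ : Matrix (Fin d) (Fin d) ℂ →ₗ[ℂ] Matrix (Fin d) (Fin d) ℂ)
    (hΦ1 : Φ 1 = 1) (hΦmul : ∀ X Y, Φ (X * Y) = Φ X * Φ Y)
    (hΦstar : ∀ X, Φ (star X) = star (Φ X))
    (hbij : Function.Bijective Φ) :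
    ∃ U : Matrix (Fin d) (Fin d) ℂ,
      U * star U = 1 ∧ star U * U = 1 ∧ ∀ X, Φ X = U * X * star U :=
  stmt6_general Φ hΦmul hΦstar hbij
end

section
/- Let ρ be a density operator on H_A ⊗ H_B, {P_α} a PVM on H_A, and set Z_α = Tr_A[(P_α ⊗ I)ρ] with support projections Q_α satisfying Q_α Q_β = 0 for α ≠ β. Then (P_α ⊗ (I − Q_α)) ρ = 0 and ρ (P_α ⊗ (I − Q_α)) = 0 for each α. -/
/-!
Write `E = P_α ⊗ (I - Q_α)`. Pulling `I - Q_α` out of the partial trace gives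
`Tr(E ρ) = Tr((I - Q_α) Z_α)`, which vanishes because `Q_α Z_α = Z_α`. Both `E` (a Kronecker
product of projections) and `ρ` are positive semidefinite, and for positive semidefinite
`A = X†X`, `B = Y†Y` the trace `Tr(A B) = ‖Y X†‖₂²` vanishes only if `Y X† = 0`, whence
`A B = 0`. Applied to `(E, ρ)` and to `(ρ, E)` this gives both identities.
-/

open Matrix Kronecker Finset ComplexOrder

noncomputable section

/-- Partial trace over the first tensor factor. -/
def ptraceA {α β : Type*} [Fintype α] (ρ : Matrix (α × β) (α × β) ℂ) : Matrix β β ℂ :=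
  Matrix.of fun j j' => ∑ i, ρ (i, j) (i, j')

section

open scoped MatrixOrder Matrix.Norms.L2Operator

variable {𝕜 n : Type*} [RCLike 𝕜] [Fintype n]

theorem Matrix.PosSemidef.mul_eq_zero_of_trace_mul_eq_zero {A B : Matrix n n 𝕜}
    (hA : A.PosSemidef) (hB : B.PosSemidef) (h : (A * B).trace = 0) : A * B = 0 := by
  classical
  obtain ⟨X, rfl⟩ := CStarAlgebra.nonneg_iff_eq_star_mul_self.mp hA.nonneg
  obtain ⟨Y, rfl⟩ := CStarAlgebra.nonneg_iff_eq_star_mul_self.mp hB.nonneg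
  simp only [star_eq_conjTranspose] at h ⊢
  have hYX : Y * Xᴴ = 0 := by
    rw [← trace_conjTranspose_mul_self_eq_zero_iff, conjTranspose_mul,
      conjTranspose_conjTranspose, trace_mul_comm, Matrix.mul_assoc, trace_mul_comm, ← h]
    simp only [Matrix.mul_assoc]
  rw [show Xᴴ * X * (Yᴴ * Y) = Xᴴ * (Y * Xᴴ)ᴴ * Y by simp [Matrix.mul_assoc], hYX]
  simp

theorem IsStarProjection.posSemidef {E : Matrix n n 𝕜} (hE : IsStarProjection E) :
    E.PosSemidef :=
  nonneg_iff_posSemidef.mp hE.nonneg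

theorem IsStarProjection.kronecker {m : Type*} [Fintype m] {P : Matrix m m 𝕜}
    {Q : Matrix n n 𝕜} (hP : IsStarProjection P) (hQ : IsStarProjection Q) :
    IsStarProjection (P ⊗ₖ Q) where
  isIdempotentElem := by
    rw [IsIdempotentElem, ← mul_kronecker_mul, hP.isIdempotentElem.eq, hQ.isIdempotentElem.eq]
  isSelfAdjoint := by
    rw [IsSelfAdjoint, star_eq_conjTranspose, conjTranspose_kronecker, ← star_eq_conjTranspose,
      ← star_eq_conjTranspose, hP.isSelfAdjoint.star_eq, hQ.isSelfAdjoint.star_eq]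

end

theorem trace_one_kronecker_mul_eq_trace_mul_ptraceA {α β : Type*} [Fintype α] [Fintype β]
    [DecidableEq α] (M : Matrix β β ℂ) (σ : Matrix (α × β) (α × β) ℂ) :
    ((1 ⊗ₖ M) * σ).trace = (M * ptraceA σ).trace := by
  simp only [trace, diag_apply, mul_apply, kroneckerMap_apply, one_apply, ite_mul, one_mul,
    zero_mul, Fintype.sum_prod_type, sum_ite_irrel, sum_const_zero, sum_ite_eq, mem_univ,
    ↓reduceIte, ptraceA, of_apply, mul_sum]
  rw [sum_comm]
  exact sum_congr rfl fun _ _ => sum_comm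

theorem trace_kronecker_mul_eq_trace_mul_ptraceA {α β : Type*} [Fintype α] [Fintype β]
    [DecidableEq α] [DecidableEq β]
    (A : Matrix α α ℂ) (M : Matrix β β ℂ) (ρ : Matrix (α × β) (α × β) ℂ) :
    ((A ⊗ₖ M) * ρ).trace = (M * ptraceA ((A ⊗ₖ (1 : Matrix β β ℂ)) * ρ)).trace := by
  rw [← trace_one_kronecker_mul_eq_trace_mul_ptraceA, ← Matrix.mul_assoc, ← mul_kronecker_mul,
    one_mul, mul_one]

theorem stmt9_general {dA dB : ℕ} {ι : Type}
    (ρ : Matrix (Fin dA × Fin dB) (Fin dA × Fin dB) ℂ)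
    (hρ : ρ.PosSemidef)
    (P : ι → Matrix (Fin dA) (Fin dA) ℂ)
    (hPherm : ∀ α, (P α).IsHermitian) (hPidem : ∀ α, P α * P α = P α)
    (Z : ι → Matrix (Fin dB) (Fin dB) ℂ)
    (hZ : ∀ α, Z α = ptraceA ((P α ⊗ₖ (1 : Matrix (Fin dB) (Fin dB) ℂ)) * ρ))
    (Q : ι → Matrix (Fin dB) (Fin dB) ℂ)
    (hQherm : ∀ α, (Q α).IsHermitian) (hQidem : ∀ α, Q α * Q α = Q α)
    (hQsupp : ∀ α, Q α * Z α = Z α) :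
    ∀ α, (P α ⊗ₖ (1 - Q α)) * ρ = 0 ∧ ρ * (P α ⊗ₖ (1 - Q α)) = 0 := by
  intro α
  have hP : IsStarProjection (P α) := ⟨hPidem α, hPherm α⟩
  have hQ : IsStarProjection (Q α) := ⟨hQidem α, hQherm α⟩
  have hE : (P α ⊗ₖ (1 - Q α)).PosSemidef := (hP.kronecker hQ.one_sub).posSemidef
  have htr : ((P α ⊗ₖ (1 - Q α)) * ρ).trace = 0 := by
    rw [trace_kronecker_mul_eq_trace_mul_ptraceA, ← hZ, sub_mul, one_mul, hQsupp, sub_self,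
      trace_zero]
  exact ⟨hE.mul_eq_zero_of_trace_mul_eq_zero hρ htr,
    hρ.mul_eq_zero_of_trace_mul_eq_zero hE (by rwa [trace_mul_comm])⟩

/-- If the conditional operators `Z_α = Tr_A[(P_α ⊗ I)ρ]` have pairwise
orthogonal support projections `Q_α`, then `(P_α ⊗ (I - Q_α)) ρ = 0 = ρ (P_α ⊗ (I - Q_α))`. -/
theorem stmt9 {dA dB : ℕ} {ι : Type} [Fintype ι] [DecidableEq ι]
    (ρ : Matrix (Fin dA × Fin dB) (Fin dA × Fin dB) ℂ)
    (hρ : ρ.PosSemidef) (htr : ρ.trace = 1)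
    (P : ι → Matrix (Fin dA) (Fin dA) ℂ)
    (hPherm : ∀ α, (P α).IsHermitian) (hPidem : ∀ α, P α * P α = P α)
    (hPorth : ∀ α β, α ≠ β → P α * P β = 0) (hPsum : ∑ α, P α = 1)
    (Z : ι → Matrix (Fin dB) (Fin dB) ℂ)
    (hZ : ∀ α, Z α = ptraceA ((P α ⊗ₖ (1 : Matrix (Fin dB) (Fin dB) ℂ)) * ρ))
    (Q : ι → Matrix (Fin dB) (Fin dB) ℂ)
    (hQherm : ∀ α, (Q α).IsHermitian) (hQidem : ∀ α, Q α * Q α = Q α)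
    (hQsupp : ∀ α, Q α * Z α = Z α)
    (hQrange : ∀ α, LinearMap.range (Q α).mulVecLin = LinearMap.range (Z α).mulVecLin)
    (hQorth : ∀ α β, α ≠ β → Q α * Q β = 0) :
    ∀ α, (P α ⊗ₖ (1 - Q α)) * ρ = 0 ∧ ρ * (P α ⊗ₖ (1 - Q α)) = 0 :=
  stmt9_general ρ hρ P hPherm hPidem Z hZ Q hQherm hQidem hQsupp
end
end

section
/- Let ρ be a density operator on H_A ⊗ H_B that is a zero-uncertainty state for a PVM {P_α} on H_A (i.e. the conditional operators Z_α = Tr_A[(P_α ⊗ I)ρ] have pairwise orthogonal supports). Then the reduced state ρ_A = Tr_B ρ commutes with every P_α: P_α ρ_A = ρ_A P_α. -/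
open Matrix Kronecker Finset ComplexOrder

noncomputable section

/-- Partial trace over the second tensor factor. -/
def ptraceB {α β : Type*} [Fintype β] (ρ : Matrix (α × β) (α × β) ℂ) : Matrix α α ℂ :=
  Matrix.of fun i i' => ∑ j, ρ (i, j) (i', j)

/-!
Write `ρ = Mᴴ M` and `W_α = M (P_α ⊗ 1)`. Since `P_α` is a Hermitian projection, `Z_α` is
`Tr_A (W_αᴴ W_α)`, and reshaping `W_α` into a matrix `F_α` with rows indexed by (row of `M`, `A`-index)
and columns by the `B`-index turns this into the Gram matrix `F_αᴴ F_α`. So `Z_α Z_β = 0` forces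
`F_β F_αᴴ = 0`, and summing its entries over the row index of `M` gives the entries of
`Tr_B (W_αᴴ W_β) = P_α ρ_A P_β`. Hence `ρ_A` is block diagonal for the resolution `∑ P_α = 1`.
-/

theorem commute_of_mul_mul_eq_zero {R ι : Type*} [Semiring R] [Fintype ι] {P : ι → R}
    (hsum : ∑ α, P α = 1) {X : R} (hX : ∀ α β, α ≠ β → P α * X * P β = 0) (α : ι) :
    Commute (P α) X := by
  have hleft : P α * X = P α * X * P α := by
    conv_lhs => rw [← mul_one (P α * X), ← hsum, Finset.mul_sum]
    exact Finset.sum_eq_single_of_mem α (mem_univ α) fun β _ hβ => hX α β hβ.symm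
  have hright : X * P α = P α * X * P α := by
    conv_lhs => rw [← one_mul (X * P α), ← hsum, Finset.sum_mul]
    simp only [← mul_assoc]
    exact Finset.sum_eq_single_of_mem α (mem_univ α) fun β _ hβ => hX β α hβ
  exact hleft.trans hright.symm

section PartialTrace

variable {α β : Type*} [Fintype α] [Fintype β] [DecidableEq β]

lemma ptraceB_kronecker_one_mul (B : Matrix α α ℂ) (ρ : Matrix (α × β) (α × β) ℂ) :
    ptraceB ((B ⊗ₖ (1 : Matrix β β ℂ)) * ρ) = B * ptraceB ρ := by
  ext i i'
  simp only [ptraceB, of_apply, mul_apply, Fintype.sum_prod_type, kroneckerMap_apply, one_apply,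
    mul_ite, mul_one, mul_zero, ite_mul, zero_mul, sum_ite_eq, mem_univ, if_true, mul_sum]
  exact sum_comm

lemma ptraceB_mul_kronecker_one (ρ : Matrix (α × β) (α × β) ℂ) (B : Matrix α α ℂ) :
    ptraceB (ρ * (B ⊗ₖ (1 : Matrix β β ℂ))) = ptraceB ρ * B := by
  ext i i'
  simp only [ptraceB, of_apply, mul_apply, Fintype.sum_prod_type, kroneckerMap_apply, one_apply,
    mul_ite, mul_one, mul_zero, sum_ite_eq', mem_univ, if_true, sum_mul]
  exact sum_comm

lemma ptraceA_kronecker_one_mul_comm (B : Matrix α α ℂ) (ρ : Matrix (α × β) (α × β) ℂ) :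
    ptraceA ((B ⊗ₖ (1 : Matrix β β ℂ)) * ρ) = ptraceA (ρ * (B ⊗ₖ (1 : Matrix β β ℂ))) := by
  ext j j'
  simp only [ptraceA, of_apply, mul_apply, Fintype.sum_prod_type, kroneckerMap_apply, one_apply,
    mul_ite, mul_one, mul_zero, ite_mul, zero_mul, sum_ite_eq, sum_ite_eq', mem_univ, if_true]
  rw [sum_comm]
  exact sum_congr rfl fun _ _ => sum_congr rfl fun _ _ => mul_comm _ _

end PartialTrace

section Reshape

variable {α β κ : Type*} [Fintype κ]

def reshapeB (W : Matrix κ (α × β) ℂ) : Matrix (κ × α) β ℂ :=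
  Matrix.of fun s j => W s.1 (s.2, j)

lemma ptraceA_conjTranspose_mul [Fintype α] (W V : Matrix κ (α × β) ℂ) :
    ptraceA (Wᴴ * V) = (reshapeB W)ᴴ * reshapeB V := by
  ext j j'
  simp only [ptraceA, reshapeB, of_apply, mul_apply, conjTranspose_apply, Fintype.sum_prod_type]
  exact sum_comm

lemma ptraceB_conjTranspose_mul_apply [Fintype β] (W V : Matrix κ (α × β) ℂ) (i i' : α) :
    ptraceB (Wᴴ * V) i i' = ∑ k, (reshapeB V * (reshapeB W)ᴴ) (k, i') (k, i) := by
  simp only [ptraceB, reshapeB, of_apply, mul_apply, conjTranspose_apply]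
  rw [sum_comm]
  exact sum_congr rfl fun _ _ => sum_congr rfl fun _ _ => mul_comm _ _

lemma ptraceB_conjTranspose_mul_eq_zero [Fintype α] [Fintype β] {W V : Matrix κ (α × β) ℂ}
    (h : ptraceA (Wᴴ * W) * ptraceA (Vᴴ * V) = 0) : ptraceB (Wᴴ * V) = 0 := by
  rw [ptraceA_conjTranspose_mul, ptraceA_conjTranspose_mul,
    mul_conjTranspose_mul_self_eq_zero, conjTranspose_mul_self_mul_eq_zero] at h
  have hVW : reshapeB V * (reshapeB W)ᴴ = 0 := by
    simpa only [conjTranspose_mul, conjTranspose_conjTranspose, conjTranspose_zero]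
      using congrArg conjTranspose h
  ext i i'
  simp [ptraceB_conjTranspose_mul_apply, hVW]

end Reshape

open scoped MatrixOrder in
theorem mul_ptraceB_mul_eq_zero {α β : Type*} [Fintype α] [Fintype β] [DecidableEq β]
    {ρ : Matrix (α × β) (α × β) ℂ} (hρ : ρ.PosSemidef) {P Q : Matrix α α ℂ}
    (hP : P.IsHermitian) (hQ : Q.IsHermitian) (hPP : P * P = P) (hQQ : Q * Q = Q)
    (h : ptraceA ((P ⊗ₖ (1 : Matrix β β ℂ)) * ρ) * ptraceA ((Q ⊗ₖ (1 : Matrix β β ℂ)) * ρ) = 0) :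
    P * ptraceB ρ * Q = 0 := by
  classical
  obtain ⟨M, rfl⟩ := CStarAlgebra.nonneg_iff_eq_star_mul_self.mp hρ.nonneg
  have hgram : ∀ {R S : Matrix α α ℂ}, R.IsHermitian →
      (M * (R ⊗ₖ (1 : Matrix β β ℂ)))ᴴ * (M * (S ⊗ₖ (1 : Matrix β β ℂ)))
        = (R ⊗ₖ (1 : Matrix β β ℂ)) * (star M * M) * (S ⊗ₖ (1 : Matrix β β ℂ)) := by
    intro R S hR
    rw [conjTranspose_mul, conjTranspose_kronecker, conjTranspose_one, hR.eq]
    simp only [star_eq_conjTranspose, Matrix.mul_assoc]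
  have hdiag : ∀ {R : Matrix α α ℂ}, R.IsHermitian → R * R = R →
      ptraceA ((M * (R ⊗ₖ (1 : Matrix β β ℂ)))ᴴ * (M * (R ⊗ₖ (1 : Matrix β β ℂ))))
        = ptraceA ((R ⊗ₖ (1 : Matrix β β ℂ)) * (star M * M)) := by
    intro R hR hRR
    rw [hgram hR, ← ptraceA_kronecker_one_mul_comm, ← Matrix.mul_assoc, ← mul_kronecker_mul, hRR,
      Matrix.one_mul]
  have h0 := ptraceB_conjTranspose_mul_eq_zero (W := M * (P ⊗ₖ (1 : Matrix β β ℂ)))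
    (V := M * (Q ⊗ₖ (1 : Matrix β β ℂ))) (by rwa [hdiag hP hPP, hdiag hQ hQQ])
  rwa [hgram hP, ptraceB_mul_kronecker_one, ptraceB_kronecker_one_mul] at h0

theorem stmt10_general {dA dB : ℕ} {ι : Type} [Fintype ι]
    (ρ : Matrix (Fin dA × Fin dB) (Fin dA × Fin dB) ℂ)
    (hρ : ρ.PosSemidef)
    (P : ι → Matrix (Fin dA) (Fin dA) ℂ)
    (hPherm : ∀ α, (P α).IsHermitian) (hPidem : ∀ α, P α * P α = P α)
    (hPsum : ∑ α, P α = 1)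
    (hZUS : ∀ α β, α ≠ β →
      ptraceA ((P α ⊗ₖ (1 : Matrix (Fin dB) (Fin dB) ℂ)) * ρ) *
        ptraceA ((P β ⊗ₖ (1 : Matrix (Fin dB) (Fin dB) ℂ)) * ρ) = 0) :
    ∀ α, P α * ptraceB ρ = ptraceB ρ * P α := fun α =>
  (commute_of_mul_mul_eq_zero hPsum (fun α β hne => mul_ptraceB_mul_eq_zero hρ (hPherm α)
    (hPherm β) (hPidem α) (hPidem β) (hZUS α β hne)) α).eq

/-- For a zero-uncertainty state `ρ` of a PVM `{P_α}`, the reduced state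
`ρ_A = Tr_B ρ` commutes with every `P_α`. -/
theorem stmt10 {dA dB : ℕ} {ι : Type} [Fintype ι] [DecidableEq ι]
    (ρ : Matrix (Fin dA × Fin dB) (Fin dA × Fin dB) ℂ)
    (hρ : ρ.PosSemidef) (htr : ρ.trace = 1)
    (P : ι → Matrix (Fin dA) (Fin dA) ℂ)
    (hPherm : ∀ α, (P α).IsHermitian) (hPidem : ∀ α, P α * P α = P α)
    (hPorth : ∀ α β, α ≠ β → P α * P β = 0) (hPsum : ∑ α, P α = 1)
    (hZUS : ∀ α β, α ≠ β →
      ptraceA ((P α ⊗ₖ (1 : Matrix (Fin dB) (Fin dB) ℂ)) * ρ) *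
        ptraceA ((P β ⊗ₖ (1 : Matrix (Fin dB) (Fin dB) ℂ)) * ρ) = 0) :
    ∀ α, P α * ptraceB ρ = ptraceB ρ * P α :=
  stmt10_general ρ hρ P hPherm hPidem hPsum hZUS
end
end

section
/- Rigidity theorem: Let H_A ≅ H_B be finite-dimensional with dim H_A = d, let ρ be a density operator on H_A ⊗ H_B, and let 𝒦 = {K_1,…,K_n} be a family of PVMs on H_A whose projections generate B(H_A) as a *-algebra. If ρ is a ZUS for every K_i, then ρ is pure and maximally entangled (rank(ρ) = 1 and Tr_B ρ = (1/d) I_A). -/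
open Matrix Kronecker Finset ComplexOrder

noncomputable section

/-!
Write `ρ = Bᴴ * B` and stack the Kraus operators `W_k = (conj (B k (i, j)))ᵢⱼ` of `ρ` into one
matrix `W`. The conditional operators become `Z_α = (Wᴴ E_α W)ᵀ` with `E_α = 1 ⊗ P_α`, and since
`Wᴴ E_α W = (E_α W)ᴴ (E_α W)`, the condition `Z_α Z_β = 0` forces `E_α (W Wᴴ) E_β = 0`. Hence the
Gram matrix `W Wᴴ` commutes with every `E_α`, so with `1 ⊗ X` for every `X` in the *-algebra
generated by the projections, i.e. for every `X`. All blocks `W_k W_lᴴ` of `W Wᴴ` are therefore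
scalar. A nonzero `W_k` is then invertible and every `W_l` is a multiple of it, so `ρ` has rank
one; and `Tr_B ρ = ∑ₖ W_k W_kᴴ` is a scalar matrix of trace one.
-/

theorem commute_of_mul_mul_eq_zero_s13 {R ι : Type*} [Semiring R] [Fintype ι] {E : ι → R}
    (hsum : ∑ a, E a = 1) {G : R} (hG : ∀ a b, a ≠ b → E a * G * E b = 0) (a : ι) :
    Commute G (E a) := by
  have hleft : G * E a = E a * G * E a := by
    calc G * E a = (∑ b, E b) * G * E a := by rw [hsum, one_mul]
      _ = E a * G * E a := by
        rw [Finset.sum_mul, Finset.sum_mul,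
          Finset.sum_eq_single a (fun b _ hb => hG b a hb) (by simp)]
  have hright : E a * G = E a * G * E a := by
    calc E a * G = E a * G * ∑ b, E b := by rw [hsum, mul_one]
      _ = E a * G * E a := by
        rw [Finset.mul_sum, Finset.sum_eq_single a (fun b _ hb => hG a b (Ne.symm hb)) (by simp)]
  exact hleft.trans hright.symm

namespace Matrix

section Projections

variable {n p ι R : Type*} [Fintype n] [Fintype p] [Fintype ι] [DecidableEq n] [Ring R]
  [PartialOrder R] [StarRing R] [StarOrderedRing R] [NoZeroDivisors R]

theorem commute_mul_conjTranspose_of_conjTranspose_mul_mul_eq_zero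
    {E : ι → Matrix n n R} (hE : ∀ a, (E a)ᴴ = E a) (hEE : ∀ a, E a * E a = E a)
    (hsum : ∑ a, E a = 1) (W : Matrix n p R)
    (hW : ∀ a b, a ≠ b → (Wᴴ * E a * W) * (Wᴴ * E b * W) = 0) (a : ι) :
    Commute (W * Wᴴ) (E a) := by
  refine commute_of_mul_mul_eq_zero_s13 hsum (fun a b hab => ?_) a
  have hsq : ∀ a, Wᴴ * E a * W = (E a * W)ᴴ * (E a * W) := fun a => by
    rw [conjTranspose_mul, hE, Matrix.mul_assoc, Matrix.mul_assoc, ← Matrix.mul_assoc (E a),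
      hEE]
  have h := hW a b hab
  rw [hsq, hsq, conjTranspose_mul_self_mul_eq_zero, mul_conjTranspose_mul_self_eq_zero,
    conjTranspose_mul, hE] at h
  simpa only [Matrix.mul_assoc] using h

end Projections

section Kronecker

variable {m n R : Type*} [Fintype m] [Fintype n] [DecidableEq m]

variable (m) in
def oneKroneckerStarAlgHom [DecidableEq n] [CommSemiring R] [StarRing R] :
    Matrix n n R →⋆ₐ[R] Matrix (m × n) (m × n) R where
  toFun X := 1 ⊗ₖ X
  map_one' := one_kronecker_one
  map_mul' X Y := by rw [← mul_kronecker_mul, Matrix.one_mul]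
  map_zero' := kronecker_zero _
  map_add' := kronecker_add _
  commutes' c := by
    simp only [Algebra.algebraMap_eq_smul_one, kronecker_smul, one_kronecker_one]
  map_star' X := by
    simp only [star_eq_conjTranspose, conjTranspose_kronecker, conjTranspose_one]

theorem commute_one_kronecker_of_adjoin_eq_top [DecidableEq n] [Field R] [StarRing R]
    {s : Set (Matrix n n R)} (hs : StarAlgebra.adjoin R s = ⊤)
    {M : Matrix (m × n) (m × n) R} (hM : M.IsHermitian)
    (h : ∀ X ∈ s, Commute M (1 ⊗ₖ X)) (X : Matrix n n R) : Commute M (1 ⊗ₖ X) := by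
  have hle : StarAlgebra.adjoin R s ≤
      (StarSubalgebra.centralizer R {M}).comap (oneKroneckerStarAlgHom m) := by
    refine StarAlgebra.adjoin_le fun Y hY => ?_
    rw [SetLike.mem_coe, StarSubalgebra.mem_comap, StarSubalgebra.mem_centralizer_iff]
    rintro _ rfl
    rw [star_eq_conjTranspose, hM.eq]
    exact ⟨h Y hY, h Y hY⟩
  rw [hs] at hle
  exact ((StarSubalgebra.mem_centralizer_iff R).mp (hle StarSubalgebra.mem_top) M rfl).1

variable [Semiring R]

theorem submatrix_mul_one_kronecker (M : Matrix (m × n) (m × n) R) (X : Matrix n n R)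
    (k l : m) :
    (M * (1 ⊗ₖ X)).submatrix (Prod.mk k) (Prod.mk l) =
      M.submatrix (Prod.mk k) (Prod.mk l) * X := by
  ext i j
  simp [mul_apply, Fintype.sum_prod_type, one_apply]

theorem submatrix_one_kronecker_mul (M : Matrix (m × n) (m × n) R) (X : Matrix n n R)
    (k l : m) :
    ((1 ⊗ₖ X) * M).submatrix (Prod.mk k) (Prod.mk l) =
      X * M.submatrix (Prod.mk k) (Prod.mk l) := by
  ext i j
  simp [mul_apply, Fintype.sum_prod_type, one_apply]

theorem submatrix_mem_range_scalar_of_commute_one_kronecker [DecidableEq n]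
    {M : Matrix (m × n) (m × n) R} (hM : ∀ X, Commute M (1 ⊗ₖ X)) (k l : m) :
    M.submatrix (Prod.mk k) (Prod.mk l) ∈ Set.range (scalar n) := by
  refine mem_range_scalar_of_commute_single fun i j _ => ?_
  have h := congrArg (·.submatrix (Prod.mk k) (Prod.mk l)) (hM (single i j 1)).eq
  simp only [submatrix_mul_one_kronecker, submatrix_one_kronecker_mul] at h
  exact h.symm

end Kronecker

theorem submatrix_mul_conjTranspose_self {m α β R : Type*} [Fintype β] [Semiring R]
    [StarRing R] (W : Matrix (m × α) β R) (k l : m) :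
    (W * Wᴴ).submatrix (Prod.mk k) (Prod.mk l) =
      W.submatrix (Prod.mk k) id * (W.submatrix (Prod.mk l) id)ᴴ := by
  ext i j
  simp [mul_apply]

theorem exists_smul_eq_of_mul_conjTranspose_mem_range_scalar {m n 𝕜 : Type*} [Fintype n]
    [DecidableEq n] [Field 𝕜] [PartialOrder 𝕜] [StarRing 𝕜] [StarOrderedRing 𝕜]
    {V : m → Matrix n n 𝕜} (hV : ∀ k l, V k * (V l)ᴴ ∈ Set.range (scalar n)) {k : m}
    (hk : V k ≠ 0) (l : m) : ∃ c : 𝕜, V l = c • V k := by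
  obtain ⟨a, ha⟩ := hV k k
  obtain ⟨b, hb⟩ := hV k l
  rw [scalar_apply, ← smul_one_eq_diagonal] at ha hb
  have ha0 : a ≠ 0 := by
    rintro rfl
    exact hk (self_mul_conjTranspose_eq_zero.mp (by rw [← ha, zero_smul]))
  have hinv : (a⁻¹ • (V k)ᴴ) * V k = 1 := by
    rw [mul_eq_one_comm, Matrix.mul_smul, ← ha, smul_smul, inv_mul_cancel₀ ha0, one_smul]
  have hl : (V l)ᴴ = (a⁻¹ * b) • (V k)ᴴ := by
    calc (V l)ᴴ = (a⁻¹ • (V k)ᴴ) * V k * (V l)ᴴ := by rw [hinv, Matrix.one_mul]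
      _ = (a⁻¹ * b) • (V k)ᴴ := by
        rw [Matrix.mul_assoc, ← hb, Matrix.mul_smul, Matrix.mul_one, smul_smul, mul_comm]
  refine ⟨star (a⁻¹ * b), ?_⟩
  rw [← conjTranspose_conjTranspose (V l), hl, conjTranspose_smul, conjTranspose_conjTranspose]

theorem rank_eq_one_of_forall_exists_smul_eq {m n 𝕜 : Type*} [Fintype m] [Fintype n] [Field 𝕜]
    {B : Matrix m n 𝕜} {k : m} (hk : B k ≠ 0) (h : ∀ l, ∃ c : 𝕜, B l = c • B k) :
    B.rank = 1 := by
  have hspan : Submodule.span 𝕜 (Set.range B.row) = 𝕜 ∙ B k := by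
    refine le_antisymm (Submodule.span_le.mpr ?_) (Submodule.span_mono ?_)
    · rintro _ ⟨l, rfl⟩
      obtain ⟨c, hc⟩ := h l
      change B l ∈ 𝕜 ∙ B k
      rw [hc]
      exact Submodule.smul_mem _ c (Submodule.mem_span_singleton_self _)
    · exact Set.singleton_subset_iff.mpr ⟨k, rfl⟩
  rw [rank_eq_finrank_span_row, hspan, finrank_span_singleton hk]

theorem eq_inv_card_smul_one_of_trace_eq_one {n 𝕜 : Type*} [Fintype n] [DecidableEq n]
    [Field 𝕜] {A : Matrix n n 𝕜} (hA : A ∈ Set.range (scalar n)) (htr : A.trace = 1) :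
    A = (Fintype.card n : 𝕜)⁻¹ • 1 := by
  obtain ⟨c, rfl⟩ := hA
  rw [scalar_apply, trace_diagonal, Finset.sum_const, Finset.card_univ, nsmul_eq_mul] at htr
  rw [scalar_apply, ← smul_one_eq_diagonal,
    eq_inv_of_mul_eq_one_left (a := c) (by rwa [mul_comm])]

end Matrix

section PartialTrace

variable {m α β : Type*}

theorem trace_ptraceB [Fintype α] [Fintype β] (ρ : Matrix (α × β) (α × β) ℂ) :
    (ptraceB ρ).trace = ρ.trace := by
  simp only [ptraceB, Matrix.trace, Matrix.diag, Matrix.of_apply, Fintype.sum_prod_type]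

theorem ptraceA_eq_sum_submatrix {n : Type*} [Fintype m] (M : Matrix (m × n) (m × n) ℂ) :
    ptraceA M = ∑ k, M.submatrix (Prod.mk k) (Prod.mk k) := by
  ext i j
  simp [ptraceA, Matrix.sum_apply]

theorem ptraceA_mem_range_scalar_of_commute_one_kronecker {n : Type*} [Fintype m] [Fintype n]
    [DecidableEq m] [DecidableEq n] {M : Matrix (m × n) (m × n) ℂ}
    (hM : ∀ X, Commute M (1 ⊗ₖ X)) : ptraceA M ∈ Set.range (scalar n) := by
  choose c hc using submatrix_mem_range_scalar_of_commute_one_kronecker hM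
  exact ⟨∑ k, c k k, by simp only [map_sum, hc, ptraceA_eq_sum_submatrix]⟩

def krausStack (B : Matrix m (α × β) ℂ) : Matrix (m × α) β ℂ :=
  of fun p j => star (B p.1 (p.2, j))

theorem ptraceA_kronecker_one_mul_conjTranspose_mul_self [Fintype m] [Fintype α] [Fintype β]
    [DecidableEq m] [DecidableEq β] (B : Matrix m (α × β) ℂ) (X : Matrix α α ℂ) :
    ptraceA ((X ⊗ₖ 1) * (Bᴴ * B)) =
      ((krausStack B)ᴴ * ((1 : Matrix m m ℂ) ⊗ₖ X) * krausStack B)ᵀ := by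
  ext j j'
  simp only [ptraceA, krausStack, transpose_apply, of_apply, mul_apply, kroneckerMap_apply,
    one_apply, conjTranspose_apply, star_star, Fintype.sum_prod_type, ite_mul, mul_ite, one_mul,
    mul_one, zero_mul, mul_zero, sum_ite_eq, sum_ite_eq', sum_ite_irrel, sum_const_zero, mem_univ,
    if_true, mul_sum, sum_mul]
  rw [Finset.sum_congr rfl fun _ _ => Finset.sum_comm, Finset.sum_comm]
  refine Finset.sum_congr rfl fun _ _ => ?_
  rw [Finset.sum_comm]
  exact Finset.sum_congr rfl fun _ _ => Finset.sum_congr rfl fun _ _ => by ring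

theorem ptraceB_conjTranspose_mul_self [Fintype m] [Fintype β] (B : Matrix m (α × β) ℂ) :
    ptraceB (Bᴴ * B) = ptraceA (krausStack B * (krausStack B)ᴴ) := by
  ext i i'
  simp only [ptraceA, ptraceB, krausStack, mul_apply, conjTranspose_apply, of_apply, star_star]
  exact Finset.sum_comm

theorem commute_krausStack_of_ptraceA_mul_eq_zero {ι : Type*} [Fintype ι] [Fintype m]
    [Fintype α] [Fintype β] [DecidableEq m] [DecidableEq α] [DecidableEq β]
    (B : Matrix m (α × β) ℂ) {P : ι → Matrix α α ℂ}
    (hPherm : ∀ a, (P a).IsHermitian) (hPidem : ∀ a, P a * P a = P a) (hPsum : ∑ a, P a = 1)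
    (hZ : ∀ a b, a ≠ b →
      ptraceA ((P a ⊗ₖ 1) * (Bᴴ * B)) * ptraceA ((P b ⊗ₖ 1) * (Bᴴ * B)) = 0) (a : ι) :
    Commute (krausStack B * (krausStack B)ᴴ) (1 ⊗ₖ P a) := by
  let E : Matrix α α ℂ →⋆ₐ[ℂ] Matrix (m × α) (m × α) ℂ := oneKroneckerStarAlgHom m
  refine commute_mul_conjTranspose_of_conjTranspose_mul_mul_eq_zero (E := fun a => E (P a))
    (fun a => by rw [← star_eq_conjTranspose, ← map_star, star_eq_conjTranspose, (hPherm a).eq])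
    (fun a => by rw [← map_mul, hPidem]) (by rw [← map_sum, hPsum, map_one]) _
    (fun a b hab => ?_) a
  have h := hZ b a hab.symm
  rwa [ptraceA_kronecker_one_mul_conjTranspose_mul_self,
    ptraceA_kronecker_one_mul_conjTranspose_mul_self, ← transpose_mul, transpose_eq_zero] at h

theorem rank_conjTranspose_mul_self_eq_one_of_mem_range_scalar [Fintype m] [Fintype α]
    [DecidableEq α] {B : Matrix m (α × α) ℂ} (hB : B ≠ 0)
    (h : ∀ k l, (krausStack B * (krausStack B)ᴴ).submatrix (Prod.mk k) (Prod.mk l) ∈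
      Set.range (scalar α)) :
    (Bᴴ * B).rank = 1 := by
  set V : m → Matrix α α ℂ := fun k => (krausStack B).submatrix (Prod.mk k) id
  have hV : ∀ k l, V k * (V l)ᴴ ∈ Set.range (scalar α) := fun k l => by
    rw [← submatrix_mul_conjTranspose_self]
    exact h k l
  have hBV : ∀ k, B k = fun p => star (V k p.1 p.2) := fun k => by
    ext p
    simp [V, krausStack]
  obtain ⟨k, hk⟩ : ∃ k, B k ≠ 0 := by
    by_contra! h0
    exact hB (funext h0)
  have hVk : V k ≠ 0 := by
    contrapose! hk
    rw [hBV, hk]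
    funext p
    simp
  rw [rank_conjTranspose_mul_self]
  refine rank_eq_one_of_forall_exists_smul_eq hk fun l => ?_
  obtain ⟨c, hc⟩ := exists_smul_eq_of_mul_conjTranspose_mem_range_scalar hV hVk l
  refine ⟨star c, ?_⟩
  rw [hBV, hBV, hc]
  ext p
  simp

end PartialTrace

theorem stmt13_general {d : ℕ} {ι : Type} {κ : ι → Type}
    [∀ i, Fintype (κ i)]
    (ρ : Matrix (Fin d × Fin d) (Fin d × Fin d) ℂ)
    (hρ : ρ.PosSemidef) (htr : ρ.trace = 1)
    (P : (i : ι) → κ i → Matrix (Fin d) (Fin d) ℂ)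
    (hPherm : ∀ i α, (P i α).IsHermitian) (hPidem : ∀ i α, P i α * P i α = P i α)
    (hPsum : ∀ i, ∑ α, P i α = 1)
    (hZUS : ∀ i α β, α ≠ β →
      ptraceA ((P i α ⊗ₖ (1 : Matrix (Fin d) (Fin d) ℂ)) * ρ) *
        ptraceA ((P i β ⊗ₖ (1 : Matrix (Fin d) (Fin d) ℂ)) * ρ) = 0)
    (hgen : StarAlgebra.adjoin ℂ {X | ∃ i α, X = P i α} = ⊤) :
    ρ.rank = 1 ∧ ptraceB ρ = ((d : ℂ))⁻¹ • 1 := by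
  obtain ⟨B, rfl⟩ : ∃ B, ρ = Bᴴ * B := by
    open scoped MatrixOrder in
    exact CStarAlgebra.nonneg_iff_eq_star_mul_self.mp hρ.nonneg
  have hB : B ≠ 0 := by
    rintro rfl
    simp at htr
  have hcomm : ∀ X, Commute (krausStack B * (krausStack B)ᴴ) (1 ⊗ₖ X) := by
    refine commute_one_kronecker_of_adjoin_eq_top hgen (isHermitian_mul_conjTranspose_self _) ?_
    rintro _ ⟨i, α, rfl⟩
    exact commute_krausStack_of_ptraceA_mul_eq_zero B (hPherm i) (hPidem i) (hPsum i) (hZUS i) α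
  refine ⟨rank_conjTranspose_mul_self_eq_one_of_mem_range_scalar hB
    (submatrix_mem_range_scalar_of_commute_one_kronecker hcomm), ?_⟩
  rw [← trace_ptraceB, ptraceB_conjTranspose_mul_self] at htr
  rw [ptraceB_conjTranspose_mul_self]
  simpa using eq_inv_card_smul_one_of_trace_eq_one
    (ptraceA_mem_range_scalar_of_commute_one_kronecker hcomm) htr

/-- Rigidity theorem: with `H_A ≅ H_B` of dimension `d`, if `ρ` is a common ZUS
for a family of PVMs generating `B(H_A)` as a *-algebra, then `ρ` is pure and
maximally entangled: `rank ρ = 1` and `Tr_B ρ = (1/d) I`. -/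
theorem stmt13 {d : ℕ} {ι : Type} [Fintype ι] {κ : ι → Type}
    [∀ i, Fintype (κ i)] [∀ i, DecidableEq (κ i)]
    (ρ : Matrix (Fin d × Fin d) (Fin d × Fin d) ℂ)
    (hρ : ρ.PosSemidef) (htr : ρ.trace = 1)
    (P : (i : ι) → κ i → Matrix (Fin d) (Fin d) ℂ)
    (hPherm : ∀ i α, (P i α).IsHermitian) (hPidem : ∀ i α, P i α * P i α = P i α)
    (hPorth : ∀ i α β, α ≠ β → P i α * P i β = 0) (hPsum : ∀ i, ∑ α, P i α = 1)
    (hZUS : ∀ i α β, α ≠ β →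
      ptraceA ((P i α ⊗ₖ (1 : Matrix (Fin d) (Fin d) ℂ)) * ρ) *
        ptraceA ((P i β ⊗ₖ (1 : Matrix (Fin d) (Fin d) ℂ)) * ρ) = 0)
    (hgen : StarAlgebra.adjoin ℂ {X | ∃ i α, X = P i α} = ⊤) :
    ρ.rank = 1 ∧ ptraceB ρ = ((d : ℂ))⁻¹ • 1 :=
  stmt13_general ρ hρ htr P hPherm hPidem hPsum hZUS hgen
end
end

section
/- Let 𝒜 ⊆ B(H_A) be a unital *-subalgebra of a finite-dimensional matrix algebra, ρ a density operator on H_A ⊗ H_B, ρ_B = Tr_A ρ with support S, and φ(X) = ρ_B^{-1/2} Tr_A[(Xᵀ ⊗ I)ρ] ρ_B^{-1/2} restricted to 𝒜ᵀ (with inverses taken on S). Then ρ is an 𝒜-ZUS (ZUS for every PVM contained in 𝒜) if and only if φ : 𝒜ᵀ → B(S) is a unital *-homomorphism whose image commutes with ρ_B. -/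
/-!
Writing `ρ = C Cᴴ` turns `E ↦ Tr_A[(E ⊗ I)ρ]` into a Kraus map `Ψ(Eᵀ) = ∑ₖ Jₖ Eᵀ Jₖᴴ`, so `φ` is
the Kraus map with operators `Kₖ = R Jₖ`; `φ 1 = R ρ_B R = Q` because `R` commutes with `ρ_B`
(it is the square root of `R²`, which does).

For a projection `P ∈ 𝒜ᵀ`, the ZUS condition for the measurement `{Pᵀ, 1 - Pᵀ}` reads
`Ψ(P) ρ_B = Ψ(P)²`. As `0 ≤ Ψ(P) ≤ ρ_B` is supported on `Q`, this makes `φ(P)` a projection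
commuting with `ρ_B`. Equality `φ(P) φ(P)ᴴ = φ(P Pᴴ)` in the Kadison–Schwarz inequality forces
`Kₖ P = φ(P) Kₖ` for all `k`, and the `X` with this property form a subspace on which `φ` is
multiplicative. Since `𝒜ᵀ` is spanned by its projections, `φ` is a `*`-homomorphism on `𝒜ᵀ` whose
image commutes with `ρ_B`.

Conversely, `Ψ(P) = ρ_B R φ(P) R ρ_B` is recovered from its compression, so once `φ(P_b)` commutes
with `ρ_B`, the product `Ψ(P_a) Ψ(P_b)` factors through `φ(P_a) φ(P_b) = φ(P_a P_b) = 0`.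
-/

open Matrix Kronecker Finset ComplexOrder

noncomputable section

open scoped MatrixOrder

namespace Matrix

variable {n m : Type*} [Fintype n] [Fintype m]

theorem PosSemidef.exists_eq_mul_conjTranspose {A : Matrix n n ℂ} (hA : A.PosSemidef) :
    ∃ B : Matrix n n ℂ, A = B * Bᴴ := by
  classical
  refine ⟨CFC.sqrt A, ?_⟩
  rw [(CFC.sqrt_nonneg A).posSemidef.isHermitian.eq, CFC.sqrt_mul_sqrt_self A hA.nonneg]

theorem PosSemidef.mul_eq_zero_of_le {A B : Matrix n n ℂ} (hA : A.PosSemidef)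
    (hAB : (B - A).PosSemidef) {N : Matrix n m ℂ} (hBN : B * N = 0) : A * N = 0 := by
  obtain ⟨C, rfl⟩ := hA.exists_eq_mul_conjTranspose
  have hneg : Nᴴ * (B - C * Cᴴ) * N = -(Nᴴ * (C * Cᴴ) * N) := by
    rw [Matrix.mul_sub, Matrix.sub_mul, Matrix.mul_assoc Nᴴ B, hBN, Matrix.mul_zero, zero_sub]
  have hNAN : Nᴴ * (C * Cᴴ) * N = 0 :=
    le_antisymm (by simpa [le_iff, hneg] using hAB.conjTranspose_mul_mul_same N)
      (hA.conjTranspose_mul_mul_same N).nonneg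
  have hCN : Cᴴ * N = 0 := by
    rw [← conjTranspose_mul_self_eq_zero, conjTranspose_mul, conjTranspose_conjTranspose,
      ← hNAN]
    simp only [Matrix.mul_assoc]
  rw [Matrix.mul_assoc, hCN, Matrix.mul_zero]

theorem mul_eq_self_of_range_le [DecidableEq n] {P A : Matrix n n ℂ} (hP : P * P = P)
    (h : LinearMap.range A.mulVecLin ≤ LinearMap.range P.mulVecLin) : P * A = A := by
  refine toLin'.injective (LinearMap.ext fun v => ?_)
  obtain ⟨w, hw⟩ := h ⟨v, rfl⟩
  simp only [mulVecLin_apply] at hw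
  rw [toLin'_apply, toLin'_apply, ← mulVec_mulVec, ← hw, mulVec_mulVec, hP]

end Matrix

section InvSqrtOnSupport

variable {n : Type*} [Fintype n]

structure IsInvSqrtOnSupport (σ Q R : Matrix n n ℂ) : Prop where
  isHermitian_proj : Q.IsHermitian
  proj_mul : Q * σ = σ
  posSemidef : R.PosSemidef
  mul_proj : R * Q = R
  mul_self_mul : R * R * σ = Q

namespace IsInvSqrtOnSupport

variable {σ Q R : Matrix n n ℂ}

theorem proj_mul_eq (h : IsInvSqrtOnSupport σ Q R) : Q * R = R := by
  simpa [h.isHermitian_proj.eq, h.posSemidef.isHermitian.eq] using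
    congrArg conjTranspose h.mul_proj

theorem mul_proj_eq (h : IsInvSqrtOnSupport σ Q R) (hσ : σ.IsHermitian) : σ * Q = σ := by
  simpa [h.isHermitian_proj.eq, hσ.eq] using congrArg conjTranspose h.proj_mul

theorem mul_mul_self (h : IsInvSqrtOnSupport σ Q R) (hσ : σ.IsHermitian) :
    σ * (R * R) = Q := by
  simpa [h.isHermitian_proj.eq, hσ.eq, h.posSemidef.isHermitian.eq, Matrix.mul_assoc] using
    congrArg conjTranspose h.mul_self_mul

theorem commute (h : IsInvSqrtOnSupport σ Q R) (hσ : σ.IsHermitian) : Commute R σ := by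
  classical
  have hsq : Commute (R * R) σ := by rw [Commute, SemiconjBy, h.mul_self_mul, h.mul_mul_self hσ]
  have hR : 0 ≤ R := h.posSemidef.nonneg
  rw [← CFC.sqrt_mul_self R, CFC.sqrt_eq_cfc]
  exact hsq.cfc_nnreal _

theorem mul_mul_eq (h : IsInvSqrtOnSupport σ Q R) (hσ : σ.IsHermitian) : R * σ * R = Q := by
  rw [(h.commute hσ).eq, Matrix.mul_assoc, h.mul_mul_self hσ]

theorem proj_mul_of_le (h : IsInvSqrtOnSupport σ Q R) (hσ : σ.IsHermitian) {Ψ : Matrix n n ℂ}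
    (hΨ : Ψ.PosSemidef) (hΨσ : (σ - Ψ).PosSemidef) : Q * Ψ = Ψ ∧ Ψ * Q = Ψ := by
  classical
  have hσQ : σ * (1 - Q) = 0 := by
    rw [Matrix.mul_sub, h.mul_proj_eq hσ, Matrix.mul_one, sub_self]
  have hΨQ : Ψ * Q = Ψ := by
    simpa [Matrix.mul_sub, sub_eq_zero, eq_comm] using hΨ.mul_eq_zero_of_le hΨσ hσQ
  refine ⟨?_, hΨQ⟩
  simpa [h.isHermitian_proj.eq, hΨ.isHermitian.eq] using congrArg conjTranspose hΨQ

theorem eq_of_conj (h : IsInvSqrtOnSupport σ Q R) (hσ : σ.IsHermitian) {Ψ : Matrix n n ℂ}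
    (hΨ : Q * Ψ = Ψ ∧ Ψ * Q = Ψ) : σ * R * (R * Ψ * R) * R * σ = Ψ := by
  calc σ * R * (R * Ψ * R) * R * σ = σ * (R * R) * Ψ * (R * R * σ) := by
        simp only [Matrix.mul_assoc]
    _ = Ψ := by rw [h.mul_mul_self hσ, h.mul_self_mul, hΨ.1, hΨ.2]

theorem isIdempotentElem_and_commute_of_mul_eq_mul_self (h : IsInvSqrtOnSupport σ Q R)
    (hσ : σ.IsHermitian) {Ψ : Matrix n n ℂ} (hΨ : Ψ.IsHermitian) (hsupp : Q * Ψ = Ψ ∧ Ψ * Q = Ψ)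
    (hΨσ : Ψ * σ = Ψ * Ψ) :
    IsIdempotentElem (R * Ψ * R) ∧ Commute (R * Ψ * R) σ := by
  have hcomm : Commute Ψ σ := by
    have := congrArg conjTranspose hΨσ
    rw [conjTranspose_mul, conjTranspose_mul, hσ.eq, hΨ.eq, ← hΨσ] at this
    exact this.symm
  have hRR : Ψ * (R * R) = R * R * Ψ := by
    calc Ψ * (R * R) = R * R * σ * Ψ * (R * R) := by rw [h.mul_self_mul, hsupp.1]
      _ = R * R * Ψ * (σ * (R * R)) := by
        rw [Matrix.mul_assoc (R * R) σ, ← hcomm.eq]; simp only [Matrix.mul_assoc]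
      _ = R * R * Ψ := by rw [h.mul_mul_self hσ, Matrix.mul_assoc, hsupp.2]
  refine ⟨?_, ((h.commute hσ).mul_left hcomm).mul_left (h.commute hσ)⟩
  calc R * Ψ * R * (R * Ψ * R) = R * (Ψ * (R * R)) * Ψ * R := by simp only [Matrix.mul_assoc]
    _ = R * (R * R) * (Ψ * Ψ) * R := by rw [hRR]; simp only [Matrix.mul_assoc]
    _ = R * (R * R * σ) * Ψ * R := by rw [← hΨσ, hcomm.eq]; simp only [Matrix.mul_assoc]
    _ = R * Ψ * R := by rw [h.mul_self_mul, Matrix.mul_assoc R Q, hsupp.1]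

theorem mul_eq_zero_of_conj_mul_conj_eq_zero (h : IsInvSqrtOnSupport σ Q R) (hσ : σ.IsHermitian)
    {Ψ₁ Ψ₂ : Matrix n n ℂ} (h₁ : Q * Ψ₁ = Ψ₁ ∧ Ψ₁ * Q = Ψ₁) (h₂ : Q * Ψ₂ = Ψ₂ ∧ Ψ₂ * Q = Ψ₂)
    (hcomm : Commute (R * Ψ₂ * R) σ) (h0 : R * Ψ₁ * R * (R * Ψ₂ * R) = 0) : Ψ₁ * Ψ₂ = 0 := by
  have hRσR : R * σ * σ * R = σ := by
    rw [(h.commute hσ).eq, Matrix.mul_assoc σ R σ, Matrix.mul_assoc σ (R * σ) R,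
      h.mul_mul_eq hσ, h.mul_proj_eq hσ]
  rw [← h.eq_of_conj hσ h₁, ← h.eq_of_conj hσ h₂]
  set φ₁ := R * Ψ₁ * R
  set φ₂ := R * Ψ₂ * R
  calc σ * R * φ₁ * R * σ * (σ * R * φ₂ * R * σ)
      = σ * R * φ₁ * (R * σ * σ * R) * φ₂ * R * σ := by simp only [Matrix.mul_assoc]
    _ = σ * R * (φ₁ * φ₂) * σ * R * σ := by
        rw [hRσR, Matrix.mul_assoc (σ * R * φ₁) σ φ₂, ← hcomm.eq]; simp only [Matrix.mul_assoc]
    _ = 0 := by rw [h0]; simp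

end IsInvSqrtOnSupport

end InvSqrtOnSupport

section Kraus

variable {ι l m n : Type*} [Fintype ι] [Fintype n]

def krausMap (K : ι → Matrix m n ℂ) : Matrix n n ℂ →ₗ[ℂ] Matrix m m ℂ where
  toFun X := ∑ i, K i * X * (K i)ᴴ
  map_add' X Y := by simp only [Matrix.mul_add, Matrix.add_mul, Finset.sum_add_distrib]
  map_smul' c X := by
    simp only [Matrix.mul_smul, Matrix.smul_mul, Finset.smul_sum, RingHom.id_apply]

variable (K : ι → Matrix m n ℂ)

theorem krausMap_apply (X : Matrix n n ℂ) : krausMap K X = ∑ i, K i * X * (K i)ᴴ := rfl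

theorem krausMap_conjTranspose (X : Matrix n n ℂ) : krausMap K Xᴴ = (krausMap K X)ᴴ := by
  simp only [krausMap_apply, conjTranspose_sum, conjTranspose_mul, conjTranspose_conjTranspose,
    Matrix.mul_assoc]

variable [Fintype m]

theorem posSemidef_krausMap {X : Matrix n n ℂ} (hX : X.PosSemidef) :
    (krausMap K X).PosSemidef :=
  posSemidef_sum _ fun i _ => hX.mul_mul_conjTranspose_same (K i)

theorem mul_krausMap_mul_conjTranspose (A : Matrix l m ℂ) (X : Matrix n n ℂ) :
    A * krausMap K X * Aᴴ = krausMap (fun i => A * K i) X := by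
  rw [krausMap_apply, krausMap_apply, Matrix.mul_sum, Matrix.sum_mul]
  simp only [conjTranspose_mul, Matrix.mul_assoc]

def krausMulDomain : Submodule ℂ (Matrix n n ℂ) where
  carrier := {X | ∀ i, K i * X = krausMap K X * K i}
  zero_mem' i := by simp
  add_mem' {X Y} hX hY i := by rw [Matrix.mul_add, hX i, hY i, map_add, Matrix.add_mul]
  smul_mem' c X hX i := by rw [Matrix.mul_smul, hX i, map_smul, Matrix.smul_mul]

theorem krausMap_mul_of_mem_krausMulDomain {X : Matrix n n ℂ} (hX : X ∈ krausMulDomain K)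
    (Y : Matrix n n ℂ) : krausMap K (X * Y) = krausMap K X * krausMap K Y := by
  simp only [krausMap_apply, Matrix.mul_sum]
  refine Finset.sum_congr rfl fun i _ => ?_
  rw [← Matrix.mul_assoc (K i), hX i, ← krausMap_apply]
  simp only [Matrix.mul_assoc]

theorem mul_krausMap_mul_of_isHermitian {A : Matrix m m ℂ} (hA : A.IsHermitian)
    (X : Matrix n n ℂ) : A * krausMap K X * A = krausMap (fun i => A * K i) X := by
  simpa only [hA.eq] using mul_krausMap_mul_conjTranspose K A X

variable [DecidableEq n]

theorem mem_krausMulDomain_of_krausMap_mul_conjTranspose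
    (hK : ∀ i, krausMap K 1 * K i = K i) {X : Matrix n n ℂ}
    (hX : krausMap K (X * Xᴴ) = krausMap K X * (krausMap K X)ᴴ) : X ∈ krausMulDomain K := by
  set Φ := krausMap K X with hΦ
  have hΦ1 : Φ * krausMap K 1 = Φ := by
    have hKh : ∀ i, (K i)ᴴ * krausMap K 1 = (K i)ᴴ := fun i => by
      simpa [← krausMap_conjTranspose] using congrArg conjTranspose (hK i)
    rw [hΦ, krausMap_apply, Matrix.sum_mul]
    simp only [Matrix.mul_assoc, hKh]
  have hterm : ∀ i, (K i * X - Φ * K i) * (K i * X - Φ * K i)ᴴ =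
      K i * (X * Xᴴ) * (K i)ᴴ - K i * X * (K i)ᴴ * Φᴴ - Φ * (K i * Xᴴ * (K i)ᴴ)
        + Φ * (K i * (1 : Matrix n n ℂ) * (K i)ᴴ) * Φᴴ := fun i => by
    simp only [conjTranspose_sub, conjTranspose_mul, Matrix.sub_mul, Matrix.mul_sub,
      Matrix.mul_assoc, Matrix.mul_one]
    abel
  -- the defect `Φ(X Xᴴ) - Φ Φᴴ` of the Kadison–Schwarz inequality is a sum of squares
  have hsum : ∑ i, (K i * X - Φ * K i) * (K i * X - Φ * K i)ᴴ = 0 := by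
    rw [Finset.sum_congr rfl fun i _ => hterm i, Finset.sum_add_distrib, Finset.sum_sub_distrib,
      Finset.sum_sub_distrib, ← Matrix.sum_mul, ← Matrix.mul_sum, ← Matrix.sum_mul,
      ← Matrix.mul_sum, ← krausMap_apply K (X * Xᴴ), ← krausMap_apply K X, ← krausMap_apply K Xᴴ,
      ← krausMap_apply K 1, ← hΦ, hΦ1, krausMap_conjTranspose, hX]
    abel
  intro i
  have hi := (Fintype.sum_eq_zero_iff_of_nonneg fun j =>
    (posSemidef_self_mul_conjTranspose (K j * X - Φ * K j)).nonneg).mp hsum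
  exact sub_eq_zero.mp (self_mul_conjTranspose_eq_zero.mp (congrFun hi i))

theorem mem_krausMulDomain_of_isStarProjection (hK : ∀ i, krausMap K 1 * K i = K i)
    {P : Matrix n n ℂ} (hP : IsStarProjection P) (hΦP : IsIdempotentElem (krausMap K P)) :
    P ∈ krausMulDomain K := by
  have hPh : Pᴴ = P := hP.isSelfAdjoint
  refine mem_krausMulDomain_of_krausMap_mul_conjTranspose K hK ?_
  rw [← krausMap_conjTranspose, hPh, hP.isIdempotentElem.eq, hΦP.eq]

end Kraus

section Spectral

open scoped ComplexStarModule

variable {n : Type*} [Fintype n] [DecidableEq n]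

theorem isStarProjection_cfc_indicator {Y : Matrix n n ℂ} (t : ℝ) :
    IsStarProjection (cfc (fun x : ℝ => if x = t then (1 : ℝ) else 0) Y) := by
  refine ⟨?_, cfc_predicate _ Y⟩
  have hcont := (finite_real_spectrum (A := Y)).continuousOn (Y := ℝ)
  rw [IsIdempotentElem, ← cfc_mul _ _ Y (hcont _) (hcont _)]
  congr 1
  funext x
  split_ifs <;> simp

theorem IsSelfAdjoint.eq_sum_smul_cfc_indicator {Y : Matrix n n ℂ} (hY : IsSelfAdjoint Y) :
    Y = ∑ t ∈ (finite_real_spectrum (A := Y)).toFinset,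
      t • cfc (fun x : ℝ => if x = t then (1 : ℝ) else 0) Y := by
  have hcont := (finite_real_spectrum (A := Y)).continuousOn (Y := ℝ)
  calc Y = cfc (fun x : ℝ => x) Y := (cfc_id' ℝ Y).symm
    _ = cfc (∑ t ∈ (finite_real_spectrum (A := Y)).toFinset,
          fun x : ℝ => t * if x = t then 1 else 0) Y :=
        cfc_congr fun x hx => by simp [Finset.sum_apply, hx]
    _ = _ := by
        rw [cfc_sum _ _ _ fun t _ => hcont _]
        exact Finset.sum_congr rfl fun t _ => cfc_const_mul _ _ _ (hcont _)

theorem StarSubalgebra.mem_span_isStarProjection (𝒜 : StarSubalgebra ℂ (Matrix n n ℂ))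
    {X : Matrix n n ℂ} (hX : X ∈ 𝒜) :
    X ∈ Submodule.span ℂ {P | P ∈ 𝒜 ∧ IsStarProjection P} := by
  have : IsClosed (𝒜 : Set (Matrix n n ℂ)) :=
    Submodule.closed_of_finiteDimensional 𝒜.toSubalgebra.toSubmodule
  suffices hsa : ∀ Y ∈ 𝒜, IsSelfAdjoint Y →
      Y ∈ Submodule.span ℂ {P | P ∈ 𝒜 ∧ IsStarProjection P} by
    have hre : (ℜ X : Matrix n n ℂ) ∈ 𝒜 := by
      rw [realPart_apply_coe, ← Complex.coe_smul]
      exact SMulMemClass.smul_mem _ (add_mem hX (star_mem hX))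
    have him : (ℑ X : Matrix n n ℂ) ∈ 𝒜 := by
      rw [imaginaryPart_apply_coe, ← Complex.coe_smul]
      exact SMulMemClass.smul_mem _ (SMulMemClass.smul_mem _ (sub_mem hX (star_mem hX)))
    rw [← realPart_add_I_smul_imaginaryPart X]
    exact add_mem (hsa _ hre (ℜ X).2) (Submodule.smul_mem _ _ (hsa _ him (ℑ X).2))
  intro Y hY hYsa
  rw [hYsa.eq_sum_smul_cfc_indicator]
  exact Submodule.sum_mem _ fun t _ => Submodule.smul_of_tower_mem _ t
    (Submodule.subset_span ⟨cfc_mem _ hY, isStarProjection_cfc_indicator t⟩)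

end Spectral

section Transpose

variable {n : Type*} [Fintype n]

theorem IsStarProjection.matrix_transpose {P : Matrix n n ℂ} (hP : IsStarProjection P) :
    IsStarProjection Pᵀ :=
  ⟨by rw [IsIdempotentElem, ← transpose_mul, hP.isIdempotentElem.eq],
    by rw [IsSelfAdjoint, star_eq_conjTranspose,
      conjTranspose_transpose_eq_transpose_conjTranspose, ← star_eq_conjTranspose,
      hP.isSelfAdjoint.star_eq]⟩

variable [DecidableEq n]

def StarSubalgebra.transpose (𝒜 : StarSubalgebra ℂ (Matrix n n ℂ)) :
    StarSubalgebra ℂ (Matrix n n ℂ) where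
  carrier := {X | Xᵀ ∈ 𝒜}
  mul_mem' {X Y} hX hY := by simpa only [Set.mem_ofPred_eq, transpose_mul] using mul_mem hY hX
  add_mem' {X Y} hX hY := by simpa only [Set.mem_ofPred_eq, transpose_add] using add_mem hX hY
  algebraMap_mem' c := by
    simpa only [Set.mem_ofPred_eq, algebraMap_eq_diagonal, diagonal_transpose] using
      𝒜.algebraMap_mem c
  star_mem' {X} (hX : Xᵀ ∈ 𝒜) := by
    change Xᴴᵀ ∈ 𝒜
    rw [← conjTranspose_transpose_eq_transpose_conjTranspose]
    exact star_mem hX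

theorem StarSubalgebra.mem_transpose {𝒜 : StarSubalgebra ℂ (Matrix n n ℂ)}
    {X : Matrix n n ℂ} : X ∈ 𝒜.transpose ↔ Xᵀ ∈ 𝒜 := Iff.rfl

end Transpose

section PartialTrace

variable {α β κ : Type*} [Fintype α] [Fintype β] [Fintype κ] [DecidableEq β]

def ptraceKraus (C : Matrix (α × β) κ ℂ) (k : κ) : Matrix β α ℂ := of fun b a => C (a, b) k

theorem ptraceA_kronecker_one_mul (C : Matrix (α × β) κ ℂ) (A : Matrix α α ℂ) :
    ptraceA ((A ⊗ₖ (1 : Matrix β β ℂ)) * (C * Cᴴ)) = krausMap (ptraceKraus C) Aᵀ := by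
  ext b b'
  simp only [ptraceA, krausMap_apply, ptraceKraus, of_apply, Matrix.sum_apply, mul_apply,
    Fintype.sum_prod_type, kroneckerMap_apply, one_apply, conjTranspose_apply, transpose_apply,
    mul_ite, mul_one, mul_zero, ite_mul, zero_mul, Finset.sum_ite_eq, Finset.mem_univ, if_true]
  simp only [Finset.mul_sum, Finset.sum_mul]
  conv_rhs => rw [Finset.sum_comm]
  refine Finset.sum_congr rfl fun i _ => ?_
  conv_rhs => rw [Finset.sum_comm]
  refine Finset.sum_congr rfl fun k _ => Finset.sum_congr rfl fun m _ => ?_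
  ring

end PartialTrace

section Correspondence

variable {α β κ : Type*} [Fintype α] [Fintype β] [Fintype κ] [DecidableEq α]
variable {Q R : Matrix β β ℂ} (J : κ → Matrix β α ℂ)

namespace IsInvSqrtOnSupport

theorem krausMap_mul_one (hS : IsInvSqrtOnSupport (krausMap J 1) Q R) :
    krausMap (fun k => R * J k) 1 = Q := by
  rw [← mul_krausMap_mul_of_isHermitian J hS.posSemidef.isHermitian,
    hS.mul_mul_eq (posSemidef_krausMap J PosSemidef.one).isHermitian]

theorem proj_mul_krausMap (hS : IsInvSqrtOnSupport (krausMap J 1) Q R) {P : Matrix α α ℂ}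
    (hP : IsStarProjection P) :
    Q * krausMap J P = krausMap J P ∧ krausMap J P * Q = krausMap J P :=
  hS.proj_mul_of_le (posSemidef_krausMap J PosSemidef.one).isHermitian
    (posSemidef_krausMap J hP.nonneg.posSemidef)
    (by rw [← map_sub]; exact posSemidef_krausMap J hP.one_sub.nonneg.posSemidef)

theorem krausMap_mul_eq_zero (hS : IsInvSqrtOnSupport (krausMap J 1) Q R)
    {P₁ P₂ : Matrix α α ℂ} (hP₁ : IsStarProjection P₁) (hP₂ : IsStarProjection P₂)
    (h0 : krausMap (fun k => R * J k) P₁ * krausMap (fun k => R * J k) P₂ = 0)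
    (hcomm : Commute (krausMap (fun k => R * J k) P₂) (krausMap J 1)) :
    krausMap J P₁ * krausMap J P₂ = 0 := by
  have hRJR := mul_krausMap_mul_of_isHermitian J hS.posSemidef.isHermitian
  exact hS.mul_eq_zero_of_conj_mul_conj_eq_zero (posSemidef_krausMap J PosSemidef.one).isHermitian
    (hS.proj_mul_krausMap J hP₁) (hS.proj_mul_krausMap J hP₂) (by rwa [hRJR])
    (by rwa [hRJR, hRJR])

variable [DecidableEq β]

theorem mem_krausMulDomain_of_orthogonal
    (hS : IsInvSqrtOnSupport (krausMap J 1) Q R) (𝒜 : StarSubalgebra ℂ (Matrix α α ℂ))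
    (hZ : ∀ P ∈ 𝒜, IsStarProjection P → krausMap J P * krausMap J (1 - P) = 0)
    {X : Matrix α α ℂ} (hX : X ∈ 𝒜) :
    X ∈ krausMulDomain (fun k => R * J k) ∧
      Commute (krausMap (fun k => R * J k) X) (krausMap J 1) := by
  set σ := krausMap J 1
  have hK : ∀ k, krausMap (fun k => R * J k) 1 * (R * J k) = R * J k := fun k => by
    rw [hS.krausMap_mul_one, ← Matrix.mul_assoc, hS.proj_mul_eq]
  let M := krausMulDomain (fun k => R * J k) ⊓
    (Subalgebra.centralizer ℂ {σ}).toSubmodule.comap (krausMap fun k => R * J k)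
  suffices hM : X ∈ M from ⟨hM.1, (Subalgebra.mem_centralizer_iff ℂ).mp hM.2 σ rfl |>.symm⟩
  refine Submodule.span_le.mpr ?_ (𝒜.mem_span_isStarProjection hX)
  rintro P ⟨hP, hproj⟩
  have hΨσ : krausMap J P * σ = krausMap J P * krausMap J P := by
    rw [← sub_eq_zero, ← Matrix.mul_sub, ← map_sub]; exact hZ P hP hproj
  obtain ⟨hidem, hcomm⟩ := hS.isIdempotentElem_and_commute_of_mul_eq_mul_self
    (posSemidef_krausMap J PosSemidef.one).isHermitian
    (posSemidef_krausMap J hproj.nonneg.posSemidef).isHermitian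
    (hS.proj_mul_krausMap J hproj) hΨσ
  rw [mul_krausMap_mul_of_isHermitian J hS.posSemidef.isHermitian] at hidem hcomm
  refine ⟨mem_krausMulDomain_of_isStarProjection _ hK hproj hidem, ?_⟩
  show krausMap _ P ∈ Subalgebra.centralizer ℂ {σ}
  rw [Subalgebra.mem_centralizer_iff]
  rintro _ rfl
  exact hcomm.eq.symm

end IsInvSqrtOnSupport

end Correspondence

section ZUS

variable {α β : Type*} [Fintype α] [Fintype β] [DecidableEq α] [DecidableEq β]

def IsZUS (𝒜 : StarSubalgebra ℂ (Matrix α α ℂ)) (ρ : Matrix (α × β) (α × β) ℂ) : Prop :=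
  ∀ (ι : Type) [Fintype ι] [DecidableEq ι] (E : ι → Matrix α α ℂ),
    (∀ a, E a ∈ 𝒜) → (∀ a, (E a).IsHermitian) → (∀ a, E a * E a = E a) →
    (∀ a b, a ≠ b → E a * E b = 0) → (∑ a, E a) = 1 →
    ∀ a b, a ≠ b →
      ptraceA ((E a ⊗ₖ (1 : Matrix β β ℂ)) * ρ) * ptraceA ((E b ⊗ₖ (1 : Matrix β β ℂ)) * ρ) = 0

theorem IsZUS.ptraceA_mul_ptraceA_one_sub {𝒜 : StarSubalgebra ℂ (Matrix α α ℂ)}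
    {ρ : Matrix (α × β) (α × β) ℂ} (h : IsZUS 𝒜 ρ) {P : Matrix α α ℂ} (hP : P ∈ 𝒜)
    (hproj : IsStarProjection P) :
    ptraceA ((P ⊗ₖ (1 : Matrix β β ℂ)) * ρ) *
      ptraceA (((1 - P) ⊗ₖ (1 : Matrix β β ℂ)) * ρ) = 0 :=
  h Bool (fun b => if b then P else 1 - P)
    (Bool.forall_bool.mpr ⟨sub_mem (one_mem 𝒜) hP, hP⟩)
    (Bool.forall_bool.mpr ⟨hproj.one_sub.isSelfAdjoint, hproj.isSelfAdjoint⟩)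
    (Bool.forall_bool.mpr ⟨hproj.one_sub.isIdempotentElem, hproj.isIdempotentElem⟩)
    (by simp [hproj.mul_one_sub_self, hproj.one_sub_mul_self]) (by simp) true false (by decide)

end ZUS

theorem stmt16_general {dA dB : ℕ}
    (𝒜 : StarSubalgebra ℂ (Matrix (Fin dA) (Fin dA) ℂ))
    (ρ : Matrix (Fin dA × Fin dB) (Fin dA × Fin dB) ℂ)
    (hρ : ρ.PosSemidef)
    (Q R : Matrix (Fin dB) (Fin dB) ℂ)
    (hQherm : Q.IsHermitian) (hQidem : Q * Q = Q)
    (hQsupp : LinearMap.range Q.mulVecLin = LinearMap.range (ptraceA ρ).mulVecLin)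
    (hR : R.PosSemidef) (hRQ : R * Q = R) (hRinv : R * R * ptraceA ρ = Q)
    (φ : Matrix (Fin dA) (Fin dA) ℂ → Matrix (Fin dB) (Fin dB) ℂ)
    (hφ : ∀ X, φ X = R * ptraceA ((Xᵀ ⊗ₖ (1 : Matrix (Fin dB) (Fin dB) ℂ)) * ρ) * R) :
    (∀ (ι : Type) [Fintype ι] [DecidableEq ι] (E : ι → Matrix (Fin dA) (Fin dA) ℂ),
        (∀ α, E α ∈ 𝒜) → (∀ α, (E α).IsHermitian) → (∀ α, E α * E α = E α) →
        (∀ α β, α ≠ β → E α * E β = 0) → (∑ α, E α) = 1 →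
        ∀ α β, α ≠ β →
          ptraceA ((E α ⊗ₖ (1 : Matrix (Fin dB) (Fin dB) ℂ)) * ρ) *
            ptraceA ((E β ⊗ₖ (1 : Matrix (Fin dB) (Fin dB) ℂ)) * ρ) = 0)
    ↔
    (φ 1 = Q ∧
     (∀ X Y, Xᵀ ∈ 𝒜 → Yᵀ ∈ 𝒜 → φ (X * Y) = φ X * φ Y) ∧
     (∀ X, Xᵀ ∈ 𝒜 → φ (star X) = star (φ X)) ∧
     (∀ X, Xᵀ ∈ 𝒜 → φ X * ptraceA ρ = ptraceA ρ * φ X)) := by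
  change IsZUS 𝒜 ρ ↔ _
  obtain ⟨C, rfl⟩ := hρ.exists_eq_mul_conjTranspose
  set J := ptraceKraus C
  have hψ : ∀ E, ptraceA ((E ⊗ₖ (1 : Matrix (Fin dB) (Fin dB) ℂ)) * (C * Cᴴ)) =
      krausMap J Eᵀ := ptraceA_kronecker_one_mul C
  have hσ : ptraceA (C * Cᴴ) = krausMap J 1 := by simpa using hψ 1
  have hS : IsInvSqrtOnSupport (krausMap J 1) Q R :=
    ⟨hQherm, mul_eq_self_of_range_le hQidem (hσ ▸ hQsupp.ge), hR, hRQ, hσ ▸ hRinv⟩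
  obtain rfl : φ = krausMap (fun k => R * J k) := funext fun X => by
    rw [hφ, hψ, transpose_transpose, mul_krausMap_mul_of_isHermitian J hR.isHermitian]
  rw [hσ]
  constructor
  · intro hZ
    have hZ' : ∀ P ∈ 𝒜.transpose, IsStarProjection P →
        krausMap J P * krausMap J (1 - P) = 0 := fun P hP hproj => by
      simpa [hψ] using hZ.ptraceA_mul_ptraceA_one_sub (StarSubalgebra.mem_transpose.mp hP)
        hproj.matrix_transpose
    have key := fun X (hX : Xᵀ ∈ 𝒜) =>
      hS.mem_krausMulDomain_of_orthogonal J 𝒜.transpose hZ' (StarSubalgebra.mem_transpose.mpr hX)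
    exact ⟨hS.krausMap_mul_one J,
      fun X Y hX _ => krausMap_mul_of_mem_krausMulDomain _ (key X hX).1 Y,
      fun X _ => krausMap_conjTranspose _ X, fun X hX => (key X hX).2.eq⟩
  · rintro ⟨-, hmul, -, hcomm⟩ ι _ _ E hmem hherm hidem horth - a b hab
    have hproj : ∀ c, IsStarProjection (E c)ᵀ := fun c =>
      IsStarProjection.matrix_transpose ⟨hidem c, hherm c⟩
    have hmemT : ∀ c, ((E c)ᵀ)ᵀ ∈ 𝒜 := fun c => by rw [transpose_transpose]; exact hmem c
    rw [hψ, hψ]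
    refine hS.krausMap_mul_eq_zero J (hproj a) (hproj b) ?_ (hcomm _ (hmemT b))
    rw [← hmul _ _ (hmemT a) (hmemT b), ← transpose_mul, horth b a hab.symm, transpose_zero,
      map_zero]

/-- `ρ` is an `𝒜`-ZUS iff `φ(X) = ρ_B^{-1/2} Tr_A[(Xᵀ ⊗ I)ρ] ρ_B^{-1/2}`,
restricted to `𝒜ᵀ`, is a unital *-homomorphism into `B(S)` whose image
commutes with `ρ_B`.  Here `Q` is the support projection of `ρ_B` and `R` is
the inverse square root of `ρ_B` on its support. -/
theorem stmt16 {dA dB : ℕ}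
    (𝒜 : StarSubalgebra ℂ (Matrix (Fin dA) (Fin dA) ℂ))
    (ρ : Matrix (Fin dA × Fin dB) (Fin dA × Fin dB) ℂ)
    (hρ : ρ.PosSemidef) (htr : ρ.trace = 1)
    (Q R : Matrix (Fin dB) (Fin dB) ℂ)
    (hQherm : Q.IsHermitian) (hQidem : Q * Q = Q)
    (hQsupp : LinearMap.range Q.mulVecLin = LinearMap.range (ptraceA ρ).mulVecLin)
    (hR : R.PosSemidef) (hRQ : R * Q = R) (hRinv : R * R * ptraceA ρ = Q)
    (φ : Matrix (Fin dA) (Fin dA) ℂ → Matrix (Fin dB) (Fin dB) ℂ)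
    (hφ : ∀ X, φ X = R * ptraceA ((Xᵀ ⊗ₖ (1 : Matrix (Fin dB) (Fin dB) ℂ)) * ρ) * R) :
    (∀ (ι : Type) [Fintype ι] [DecidableEq ι] (E : ι → Matrix (Fin dA) (Fin dA) ℂ),
        (∀ α, E α ∈ 𝒜) → (∀ α, (E α).IsHermitian) → (∀ α, E α * E α = E α) →
        (∀ α β, α ≠ β → E α * E β = 0) → (∑ α, E α) = 1 →
        ∀ α β, α ≠ β →
          ptraceA ((E α ⊗ₖ (1 : Matrix (Fin dB) (Fin dB) ℂ)) * ρ) *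
            ptraceA ((E β ⊗ₖ (1 : Matrix (Fin dB) (Fin dB) ℂ)) * ρ) = 0)
    ↔
    (φ 1 = Q ∧
     (∀ X Y, Xᵀ ∈ 𝒜 → Yᵀ ∈ 𝒜 → φ (X * Y) = φ X * φ Y) ∧
     (∀ X, Xᵀ ∈ 𝒜 → φ (star X) = star (φ X)) ∧
     (∀ X, Xᵀ ∈ 𝒜 → φ X * ptraceA ρ = ptraceA ρ * φ X)) :=
  stmt16_general 𝒜 ρ hρ Q R hQherm hQidem hQsupp hR hRQ hRinv φ hφ
end
end
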